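/- arXiv:1502.02598 — 3 statements merged into one kernel-verified Lean document; each statement's English description precedes it below -/
import Mathlib

section
/- Let Gamma be a finite subset of N^2 and phi_Gamma(z,w) = sum_{(alpha,beta) in Gamma} |z|^{2 alpha} |w|^{2 beta}. Then there exist constants 0 < c <= C (depending only on Gamma) such that for all (z,w) in C^2: c * phi_{Gamma^{(1)}}(z,w) <= det(H_{phi_Gamma}(z,w)) <= C * phi_{Gamma^{(1)}}(z,w), where Gamma^{(1)} = { (alpha,beta) + (gamma,delta) - (1,1) : (alpha,beta), (gamma,delta) in Gamma linearly independent }. -/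
/-- Wirtinger derivative `∂/∂z` (first coordinate) of a function on `ℂ²`. -/
noncomputable def dz (f : ℂ × ℂ → ℂ) (p : ℂ × ℂ) : ℂ :=
  (1 / 2) * (fderiv ℝ f p (1, 0) - Complex.I * fderiv ℝ f p (Complex.I, 0))

/-- Wirtinger derivative `∂/∂z̄` (first coordinate). -/
noncomputable def dzbar (f : ℂ × ℂ → ℂ) (p : ℂ × ℂ) : ℂ :=
  (1 / 2) * (fderiv ℝ f p (1, 0) + Complex.I * fderiv ℝ f p (Complex.I, 0))

/-- Wirtinger derivative `∂/∂w` (second coordinate). -/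
noncomputable def dw (f : ℂ × ℂ → ℂ) (p : ℂ × ℂ) : ℂ :=
  (1 / 2) * (fderiv ℝ f p (0, 1) - Complex.I * fderiv ℝ f p (0, Complex.I))

/-- Wirtinger derivative `∂/∂w̄` (second coordinate). -/
noncomputable def dwbar (f : ℂ × ℂ → ℂ) (p : ℂ × ℂ) : ℂ :=
  (1 / 2) * (fderiv ℝ f p (0, 1) + Complex.I * fderiv ℝ f p (0, Complex.I))

/-- The model monomial weight `φ_Γ(z,w) = ∑_{(α,β)∈Γ} |z|^{2α} |w|^{2β}`. -/
noncomputable def phiGamma (Γ : Finset (ℕ × ℕ)) (p : ℂ × ℂ) : ℝ :=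
  ∑ q ∈ Γ, ‖p.1‖ ^ (2 * q.1) * ‖p.2‖ ^ (2 * q.2)

/-- `Γ⁽¹⁾ = {(α,β)+(γ,δ) : (α,β),(γ,δ) ∈ Γ linearly independent} - (1,1)`. -/
def GammaOne (Γ : Finset (ℕ × ℕ)) : Finset (ℕ × ℕ) :=
  ((Γ ×ˢ Γ).filter (fun q => q.1.1 * q.2.2 ≠ q.1.2 * q.2.1)).image
    (fun q => (q.1.1 + q.2.1 - 1, q.1.2 + q.2.2 - 1))

/-- `Γ⁽²⁾ = (Γ_r - (1,0)) ∪ (Γ_u - (0,1))`. -/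
def GammaTwo (Γ : Finset (ℕ × ℕ)) : Finset (ℕ × ℕ) :=
  (Γ.filter (fun q => q.1 ≠ 0)).image (fun q => (q.1 - 1, q.2)) ∪
    (Γ.filter (fun q => q.2 ≠ 0)).image (fun q => (q.1, q.2 - 1))

/-- The determinant of the complex Hessian of `φ_Γ` (a real number). -/
noncomputable def detHessian (Γ : Finset (ℕ × ℕ)) (p : ℂ × ℂ) : ℝ :=
  letI φC : ℂ × ℂ → ℂ := fun q => (phiGamma Γ q : ℂ)
  (dz (dzbar φC) p * dw (dwbar φC) p - dz (dwbar φC) p * dw (dzbar φC) p).re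

/-- The trace of the complex Hessian of `φ_Γ` (a real number). -/
noncomputable def trHessian (Γ : Finset (ℕ × ℕ)) (p : ℂ × ℂ) : ℝ :=
  letI φC : ℂ × ℂ → ℂ := fun q => (phiGamma Γ q : ℂ)
  (dz (dzbar φC) p + dw (dwbar φC) p).re

/-- The value of the Hermitian form of the complex Hessian of `φ_Γ` at `p` on the
vector `v`, i.e. `(H_{φ_Γ}(p) v, v) = ∑_{j,k} ∂²φ/∂z_j∂z̄_k v_j v̄_k`. -/
noncomputable def hessForm (Γ : Finset (ℕ × ℕ)) (p : ℂ × ℂ) (v : ℂ × ℂ) : ℝ :=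
  letI φC : ℂ × ℂ → ℂ := fun q => (phiGamma Γ q : ℂ)
  (dz (dzbar φC) p * v.1 * (starRingEnd ℂ) v.1
    + dz (dwbar φC) p * v.1 * (starRingEnd ℂ) v.2
    + dw (dzbar φC) p * v.2 * (starRingEnd ℂ) v.1
    + dw (dwbar φC) p * v.2 * (starRingEnd ℂ) v.2).re

/-- The least eigenvalue `λ_Γ` of the complex Hessian of `φ_Γ`, as the infimum of the
Rayleigh quotient. -/
noncomputable def lamGamma (Γ : Finset (ℕ × ℕ)) (p : ℂ × ℂ) : ℝ :=
  sInf {r : ℝ | ∃ v : ℂ × ℂ, v ≠ 0 ∧ r = hessForm Γ p v / (‖v.1‖ ^ 2 + ‖v.2‖ ^ 2)}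


/-!
As a function of `(z, z̄, w, w̄)`, `φ_Γ = ∑ z^α z̄^α w^β w̄^β`, so every entry of its complex
Hessian is again a sum of such mixed monomials. Expanding the determinant over pairs
`(q, r) = ((α, β), (γ, δ)) ∈ Γ²` and averaging with the swapped pair gives
`det H_{φ_Γ} = ½ ∑_{(q,r) ∈ Γ²} (αδ - βγ)² |z|^{2(α+γ-1)} |w|^{2(β+δ-1)}`.
Only linearly independent pairs contribute, and for them `(αδ - βγ)² ≥ 1` because it is the
square of a nonzero integer. Each monomial of `φ_{Γ⁽¹⁾}` occurs at least once in this sum and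
every term is nonnegative, so `½ φ_{Γ⁽¹⁾} ≤ det H_{φ_Γ} ≤ (∑ coefficients) · φ_{Γ⁽¹⁾}`.
-/

open Complex ComplexConjugate ContinuousLinearMap

noncomputable def wirtingerCLM (α β γ δ : ℂ) : ℂ × ℂ →L[ℝ] ℂ :=
  α • fst ℝ ℂ ℂ + β • (conjCLE.toContinuousLinearMap.comp (fst ℝ ℂ ℂ))
    + γ • snd ℝ ℂ ℂ + δ • (conjCLE.toContinuousLinearMap.comp (snd ℝ ℂ ℂ))

@[simp]
lemma wirtingerCLM_apply (α β γ δ : ℂ) (v : ℂ × ℂ) :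
    wirtingerCLM α β γ δ v = α * v.1 + β * conj v.1 + γ * v.2 + δ * conj v.2 := by
  simp [wirtingerCLM]

section Wirtinger

variable {f : ℂ × ℂ → ℂ} {p : ℂ × ℂ} {α β γ δ : ℂ}

lemma HasFDerivAt.dz_eq (h : HasFDerivAt f (wirtingerCLM α β γ δ) p) : dz f p = α := by
  simp only [dz, h.fderiv, wirtingerCLM_apply, map_one, map_zero, conj_I]
  linear_combination (β - α) / 2 * I_mul_I

lemma HasFDerivAt.dzbar_eq (h : HasFDerivAt f (wirtingerCLM α β γ δ) p) : dzbar f p = β := by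
  simp only [dzbar, h.fderiv, wirtingerCLM_apply, map_one, map_zero, conj_I]
  linear_combination (α - β) / 2 * I_mul_I

lemma HasFDerivAt.dw_eq (h : HasFDerivAt f (wirtingerCLM α β γ δ) p) : dw f p = γ := by
  simp only [dw, h.fderiv, wirtingerCLM_apply, map_one, map_zero, conj_I]
  linear_combination (δ - γ) / 2 * I_mul_I

lemma HasFDerivAt.dwbar_eq (h : HasFDerivAt f (wirtingerCLM α β γ δ) p) : dwbar f p = δ := by
  simp only [dwbar, h.fderiv, wirtingerCLM_apply, map_one, map_zero, conj_I]
  linear_combination (γ - δ) / 2 * I_mul_I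

end Wirtinger

noncomputable def mixedMonomial (a b c d : ℕ) (p : ℂ × ℂ) : ℂ :=
  p.1 ^ a * conj p.1 ^ b * p.2 ^ c * conj p.2 ^ d

lemma hasFDerivAt_mixedMonomial (a b c d : ℕ) (p : ℂ × ℂ) :
    HasFDerivAt (mixedMonomial a b c d)
      (wirtingerCLM (a * mixedMonomial (a - 1) b c d p) (b * mixedMonomial a (b - 1) c d p)
        (c * mixedMonomial a b (c - 1) d p) (d * mixedMonomial a b c (d - 1) p)) p := by
  have hz : HasFDerivAt (fun p : ℂ × ℂ => p.1) (fst ℝ ℂ ℂ) p := hasFDerivAt_fst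
  have hw : HasFDerivAt (fun p : ℂ × ℂ => p.2) (snd ℝ ℂ ℂ) p := hasFDerivAt_snd
  have hz' := conjCLE.hasFDerivAt.comp p hz
  have hw' := conjCLE.hasFDerivAt.comp p hw
  refine ((((hz.pow a).fun_mul (hz'.pow b)).fun_mul (hw.pow c)).fun_mul
    (hw'.pow d)).congr_fderiv ?_
  ext v <;> simp [mixedMonomial] <;> ring

lemma hasFDerivAt_sum_mixedMonomial {ι : Type*} (s : Finset ι) (k : ι → ℂ) (A B C D : ι → ℕ)
    (p : ℂ × ℂ) :
    HasFDerivAt (fun p => ∑ i ∈ s, k i * mixedMonomial (A i) (B i) (C i) (D i) p)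
      (wirtingerCLM (∑ i ∈ s, k i * A i * mixedMonomial (A i - 1) (B i) (C i) (D i) p)
        (∑ i ∈ s, k i * B i * mixedMonomial (A i) (B i - 1) (C i) (D i) p)
        (∑ i ∈ s, k i * C i * mixedMonomial (A i) (B i) (C i - 1) (D i) p)
        (∑ i ∈ s, k i * D i * mixedMonomial (A i) (B i) (C i) (D i - 1) p)) p := by
  refine (HasFDerivAt.fun_sum fun i _ =>
    (hasFDerivAt_mixedMonomial (A i) (B i) (C i) (D i) p).const_mul (k i)).congr_fderiv ?_
  ext v <;> simp [Finset.sum_mul, Finset.sum_add_distrib, mul_add, mul_assoc]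

noncomputable def monomialWeight (q : ℕ × ℕ) (p : ℂ × ℂ) : ℝ :=
  ‖p.1‖ ^ (2 * q.1) * ‖p.2‖ ^ (2 * q.2)

lemma monomialWeight_nonneg (q : ℕ × ℕ) (p : ℂ × ℂ) : 0 ≤ monomialWeight q p := by
  unfold monomialWeight; positivity

lemma phiGamma_eq_sum_monomialWeight (Γ : Finset (ℕ × ℕ)) (p : ℂ × ℂ) :
    phiGamma Γ p = ∑ q ∈ Γ, monomialWeight q p := rfl

lemma mixedMonomial_mul (a b c d a' b' c' d' : ℕ) (p : ℂ × ℂ) :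
    mixedMonomial a b c d p * mixedMonomial a' b' c' d' p
      = mixedMonomial (a + a') (b + b') (c + c') (d + d') p := by
  simp only [mixedMonomial, pow_add]; ring

lemma mixedMonomial_self (m n : ℕ) (p : ℂ × ℂ) :
    mixedMonomial m m n n p = monomialWeight (m, n) p := by
  have hself : ∀ (z : ℂ) (k : ℕ), z ^ k * conj z ^ k = ((‖z‖ ^ (2 * k) : ℝ) : ℂ) := by
    intro z k
    rw [← mul_pow, mul_conj', pow_mul]
    push_cast; rfl
  rw [mixedMonomial, monomialWeight, ofReal_mul, ← hself, ← hself]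
  ring

lemma ofReal_phiGamma (Γ : Finset (ℕ × ℕ)) :
    (fun p => (phiGamma Γ p : ℂ)) = fun p => ∑ q ∈ Γ, mixedMonomial q.1 q.1 q.2 q.2 p := by
  funext p
  simp only [phiGamma_eq_sum_monomialWeight, ofReal_sum, mixedMonomial_self]

lemma hasFDerivAt_ofReal_phiGamma (Γ : Finset (ℕ × ℕ)) (p : ℂ × ℂ) :
    HasFDerivAt (fun p => (phiGamma Γ p : ℂ))
      (wirtingerCLM (∑ q ∈ Γ, (q.1 : ℂ) * mixedMonomial (q.1 - 1) q.1 q.2 q.2 p)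
        (∑ q ∈ Γ, (q.1 : ℂ) * mixedMonomial q.1 (q.1 - 1) q.2 q.2 p)
        (∑ q ∈ Γ, (q.2 : ℂ) * mixedMonomial q.1 q.1 (q.2 - 1) q.2 p)
        (∑ q ∈ Γ, (q.2 : ℂ) * mixedMonomial q.1 q.1 q.2 (q.2 - 1) p)) p := by
  simpa [ofReal_phiGamma] using
    hasFDerivAt_sum_mixedMonomial Γ 1 Prod.fst Prod.fst Prod.snd Prod.snd p

lemma dzbar_ofReal_phiGamma (Γ : Finset (ℕ × ℕ)) :
    dzbar (fun p => (phiGamma Γ p : ℂ))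
      = fun p => ∑ q ∈ Γ, (q.1 : ℂ) * mixedMonomial q.1 (q.1 - 1) q.2 q.2 p :=
  funext fun p => (hasFDerivAt_ofReal_phiGamma Γ p).dzbar_eq

lemma dwbar_ofReal_phiGamma (Γ : Finset (ℕ × ℕ)) :
    dwbar (fun p => (phiGamma Γ p : ℂ))
      = fun p => ∑ q ∈ Γ, (q.2 : ℂ) * mixedMonomial q.1 q.1 q.2 (q.2 - 1) p :=
  funext fun p => (hasFDerivAt_ofReal_phiGamma Γ p).dwbar_eq

/-- The exponents `a - 1`, `d - 1` in the Hessian truncate at `0`, but exactly where the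
coefficient `a * d` vanishes. -/
lemma natCast_mul_mixedMonomial_mul {a d : ℕ} (a₁ b₁ c₁ d₁ a₂ b₂ c₂ d₂ m n : ℕ) (p : ℂ × ℂ)
    (h : a ≠ 0 → d ≠ 0 → a₁ + a₂ = m ∧ b₁ + b₂ = m ∧ c₁ + c₂ = n ∧ d₁ + d₂ = n) :
    (a * d : ℂ) * (mixedMonomial a₁ b₁ c₁ d₁ p * mixedMonomial a₂ b₂ c₂ d₂ p)
      = a * d * monomialWeight (m, n) p := by
  rcases eq_or_ne a 0 with rfl | ha
  · simp
  rcases eq_or_ne d 0 with rfl | hd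
  · simp
  obtain ⟨ha, hb, hc, hd⟩ := h ha hd
  rw [mixedMonomial_mul, ha, hb, hc, hd, mixedMonomial_self]

lemma hessian_det_term (a b c d : ℕ) (p : ℂ × ℂ) :
    a * a * mixedMonomial (a - 1) (a - 1) b b p * (d * d * mixedMonomial c c (d - 1) (d - 1) p)
      - b * a * mixedMonomial (a - 1) a b (b - 1) p
        * (c * d * mixedMonomial c (c - 1) (d - 1) d p)
      = (((a * a * (d * d) - b * a * (c * d) : ℝ)
          * monomialWeight (a + c - 1, b + d - 1) p : ℝ) : ℂ) := by
  have hdiag := natCast_mul_mixedMonomial_mul (a := a) (d := d)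
    (a - 1) (a - 1) b b c c (d - 1) (d - 1) (a + c - 1) (b + d - 1) p (by omega)
  have hoff := natCast_mul_mixedMonomial_mul (a := b * a) (d := c * d)
    (a - 1) a b (b - 1) c (c - 1) (d - 1) d (a + c - 1) (b + d - 1) p
    (by simp only [ne_eq, mul_eq_zero, not_or]; omega)
  push_cast at hoff ⊢
  linear_combination (a * d : ℂ) * hdiag - hoff

lemma detHessian_eq_sum (Γ : Finset (ℕ × ℕ)) (p : ℂ × ℂ) :
    detHessian Γ p = ∑ x ∈ Γ ×ˢ Γ,
      (x.1.1 * x.1.1 * (x.2.2 * x.2.2) - x.1.2 * x.1.1 * (x.2.1 * x.2.2) : ℝ)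
        * monomialWeight (x.1.1 + x.2.1 - 1, x.1.2 + x.2.2 - 1) p := by
  have hzbar := hasFDerivAt_sum_mixedMonomial Γ (fun q => (q.1 : ℂ)) Prod.fst (Prod.fst · - 1)
    Prod.snd Prod.snd p
  have hwbar := hasFDerivAt_sum_mixedMonomial Γ (fun q => (q.2 : ℂ)) Prod.fst Prod.fst
    Prod.snd (Prod.snd · - 1) p
  beta_reduce at hzbar hwbar
  rw [detHessian, dzbar_ofReal_phiGamma, dwbar_ofReal_phiGamma, hzbar.dz_eq, hzbar.dw_eq,
    hwbar.dz_eq, hwbar.dw_eq, ← ofReal_re (∑ x ∈ Γ ×ˢ Γ, _)]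
  simp only [Finset.sum_mul_sum, ← Finset.sum_sub_distrib, ofReal_sum, Finset.sum_product,
    hessian_det_term]

lemma Finset.sum_product_self_swap {α M : Type*} [AddCommMonoid M] (s : Finset α)
    (F : α → α → M) : ∑ x ∈ s ×ˢ s, F x.1 x.2 = ∑ x ∈ s ×ˢ s, F x.2 x.1 := by
  rw [Finset.sum_product, Finset.sum_product_right]

def wedge (q r : ℕ × ℕ) : ℤ := q.1 * r.2 - q.2 * r.1

lemma wedge_eq_zero_iff {q r : ℕ × ℕ} : wedge q r = 0 ↔ q.1 * r.2 = q.2 * r.1 := by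
  rw [wedge, sub_eq_zero]
  exact_mod_cast Iff.rfl

lemma one_le_wedge_sq {q r : ℕ × ℕ} (h : q.1 * r.2 ≠ q.2 * r.1) :
    (1 : ℝ) ≤ (wedge q r : ℝ) ^ 2 :=
  mod_cast (one_le_sq_iff_one_le_abs _).mpr (Int.one_le_abs (wedge_eq_zero_iff.not.mpr h))

lemma detHessian_eq_sum_wedge_sq (Γ : Finset (ℕ × ℕ)) (p : ℂ × ℂ) :
    detHessian Γ p = ∑ x ∈ Γ ×ˢ Γ with x.1.1 * x.2.2 ≠ x.1.2 * x.2.1,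
      (wedge x.1 x.2 : ℝ) ^ 2 / 2 * monomialWeight (x.1.1 + x.2.1 - 1, x.1.2 + x.2.2 - 1) p := by
  set S := fun q r : ℕ × ℕ => (q.1 * q.1 * (r.2 * r.2) - q.2 * q.1 * (r.1 * r.2) : ℝ)
    * monomialWeight (q.1 + r.1 - 1, q.2 + r.2 - 1) p
  have hswap := Finset.sum_product_self_swap Γ S
  calc detHessian Γ p = ∑ x ∈ Γ ×ˢ Γ, S x.1 x.2 := detHessian_eq_sum Γ p
    _ = (∑ x ∈ Γ ×ˢ Γ, S x.1 x.2 + ∑ x ∈ Γ ×ˢ Γ, S x.2 x.1) / 2 := by rw [← hswap]; ring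
    _ = ∑ x ∈ Γ ×ˢ Γ, (wedge x.1 x.2 : ℝ) ^ 2 / 2
          * monomialWeight (x.1.1 + x.2.1 - 1, x.1.2 + x.2.2 - 1) p := by
      rw [← Finset.sum_add_distrib, Finset.sum_div]
      refine Finset.sum_congr rfl fun x _ => ?_
      simp only [S, Nat.add_comm x.2.1, Nat.add_comm x.2.2, wedge]
      push_cast
      ring
    _ = _ := by
      refine (Finset.sum_filter_of_ne ?_).symm
      intro x _ hx h
      rw [wedge_eq_zero_iff.mpr h] at hx
      simp at hx

section Comparison

variable {ι β : Type*} [DecidableEq β] {s : Finset ι} {g : ι → β} {k : ι → ℝ} {u : β → ℝ}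

lemma mul_sum_image_le_sum_mul {κ : ℝ} (hu : ∀ t ∈ s.image g, 0 ≤ u t) (hk : ∀ i ∈ s, κ ≤ k i)
    (hκ : 0 ≤ κ) : κ * ∑ t ∈ s.image g, u t ≤ ∑ i ∈ s, k i * u (g i) :=
  calc κ * ∑ t ∈ s.image g, u t ≤ κ * ∑ i ∈ s, u (g i) :=
        mul_le_mul_of_nonneg_left (Finset.sum_image_le_of_nonneg hu) hκ
    _ = ∑ i ∈ s, κ * u (g i) := Finset.mul_sum _ _ _
    _ ≤ ∑ i ∈ s, k i * u (g i) := Finset.sum_le_sum fun i hi =>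
        mul_le_mul_of_nonneg_right (hk i hi) (hu _ (Finset.mem_image_of_mem g hi))

lemma sum_mul_le_sum_mul_sum_image (hu : ∀ t ∈ s.image g, 0 ≤ u t) (hk : ∀ i ∈ s, 0 ≤ k i) :
    ∑ i ∈ s, k i * u (g i) ≤ (∑ i ∈ s, k i) * ∑ t ∈ s.image g, u t := by
  rw [Finset.sum_mul]
  exact Finset.sum_le_sum fun i hi => mul_le_mul_of_nonneg_left
    (Finset.single_le_sum hu (Finset.mem_image_of_mem g hi)) (hk i hi)

end Comparison

/-- `det H_{φ_Γ} ≈ φ_{Γ⁽¹⁾}` with constants depending only on `Γ`. -/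
theorem det_hessian_comparable (Γ : Finset (ℕ × ℕ)) :
    ∃ c C : ℝ, 0 < c ∧ c ≤ C ∧ ∀ p : ℂ × ℂ,
      c * phiGamma (GammaOne Γ) p ≤ detHessian Γ p ∧
      detHessian Γ p ≤ C * phiGamma (GammaOne Γ) p := by
  set F := (Γ ×ˢ Γ).filter fun x => x.1.1 * x.2.2 ≠ x.1.2 * x.2.1
  set k := fun x : (ℕ × ℕ) × ℕ × ℕ => (wedge x.1 x.2 : ℝ) ^ 2 / 2
  have hk : ∀ x ∈ F, 1 / 2 ≤ k x := fun x hx => by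
    have := one_le_wedge_sq (Finset.mem_filter.mp hx).2
    simp only [k]; linarith
  refine ⟨1 / 2, max (1 / 2) (∑ x ∈ F, k x), by norm_num, le_max_left _ _, fun p => ⟨?_, ?_⟩⟩
  · rw [detHessian_eq_sum_wedge_sq]
    exact mul_sum_image_le_sum_mul (fun t _ => monomialWeight_nonneg t p) hk (by norm_num)
  · rw [detHessian_eq_sum_wedge_sq]
    refine (sum_mul_le_sum_mul_sum_image (fun t _ => monomialWeight_nonneg t p)
      fun x _ => by positivity).trans ?_
    exact mul_le_mul_of_nonneg_right (le_max_right _ _)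
      (Finset.sum_nonneg fun t _ => monomialWeight_nonneg t p)
end

section
/- Let p : R^d -> R be a nonnegative polynomial such that some coefficient of a monomial of top degree is nonzero. Then inf_{z in R^d} sup_{|u - z| <= 1} p(u) > 0. -/
/-!
Fix a top-degree monomial `s` with `coeff s p ≠ 0`. Translating a polynomial does not change its
top homogeneous component, so every translate `p(z + ·)` has the same coefficient at `s`. On the
finite-dimensional space of polynomials of degree `≤ deg p`, evaluations at the points of the unit
ball separate points, hence span the dual: `coeff s` is a finite linear combination of them, which
gives `|coeff s q| ≤ C · sup_{|u| ≤ 1} |q u|`. Applied to the translates of `p`, this bounds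
`sup_{|u - z| ≤ 1} p u` below by `|coeff s p| / C`, uniformly in `z`.
-/

open MvPolynomial Metric Topology

theorem Submodule.span_eq_top_of_forall_dual_apply_eq_zero {K V : Type*} [Field K]
    [AddCommGroup V] [Module K V] [FiniteDimensional K V] {W : Set (Module.Dual K V)}
    (hW : ∀ v, (∀ f ∈ W, f v = 0) → v = 0) : span K W = ⊤ := by
  have hbot : (span K W).dualCoannihilator = ⊥ :=
    eq_bot_iff.2 fun v hv => hW v <| by
      simpa using (Set.ext_iff.1 (coe_dualCoannihilator_span W) v).1 hv
  rw [← Subspace.dualCoannihilator_dualAnnihilator_eq (W := span K W), hbot,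
    dualAnnihilator_bot]

namespace MvPolynomial

section Degree

variable {σ R : Type*} [CommSemiring R]

theorem homogeneousComponent_add_mul {p q : MvPolynomial σ R} {a b : ℕ}
    (hp : p.totalDegree ≤ a) (hq : q.totalDegree ≤ b) :
    homogeneousComponent (a + b) (p * q) =
      homogeneousComponent a p * homogeneousComponent b q := by
  classical
  ext s
  simp only [coeff_homogeneousComponent, coeff_mul, ite_mul, zero_mul, mul_ite, mul_zero]
  have hp₀ {t : σ →₀ ℕ} (h : a < t.degree) : coeff t p = 0 :=
    coeff_eq_zero_of_totalDegree_lt (hp.trans_lt h)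
  have hq₀ {t : σ →₀ ℕ} (h : b < t.degree) : coeff t q = 0 :=
    coeff_eq_zero_of_totalDegree_lt (hq.trans_lt h)
  split_ifs with hs
  · refine Finset.sum_congr rfl fun x hx => ?_
    have hx : x.1.degree + x.2.degree = a + b := by
      rw [← map_add, Finset.HasAntidiagonal.mem_antidiagonal.1 hx, hs]
    rcases lt_trichotomy x.1.degree a with h | h | h
    · simp [hq₀ (show b < x.2.degree by omega)]
    · simp [h, show x.2.degree = b by omega]
    · simp [hp₀ h]
  · refine (Finset.sum_eq_zero fun x hx => ?_).symm
    have hx : x.1.degree + x.2.degree = s.degree := by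
      rw [← map_add, Finset.HasAntidiagonal.mem_antidiagonal.1 hx]
    split_ifs <;> first | rfl | omega

theorem homogeneousComponent_finsetProd {ι : Type*} (s : Finset ι) {f : ι → MvPolynomial σ R}
    {n : ι → ℕ} (hf : ∀ i ∈ s, (f i).totalDegree ≤ n i) :
    homogeneousComponent (∑ i ∈ s, n i) (∏ i ∈ s, f i) =
      ∏ i ∈ s, homogeneousComponent (n i) (f i) := by
  induction s using Finset.cons_induction with
  | empty => simp
  | cons j s hj ih =>
    rw [Finset.forall_mem_cons] at hf
    have hprod : (∏ i ∈ s, f i).totalDegree ≤ ∑ i ∈ s, n i :=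
      (totalDegree_finsetProd s f).trans (Finset.sum_le_sum hf.2)
    rw [Finset.prod_cons, Finset.sum_cons, Finset.prod_cons,
      homogeneousComponent_add_mul hf.1 hprod, ih hf.2]

theorem homogeneousComponent_pow {p : MvPolynomial σ R} {a : ℕ} (hp : p.totalDegree ≤ a)
    (k : ℕ) : homogeneousComponent (k * a) (p ^ k) = homogeneousComponent a p ^ k := by
  simpa using homogeneousComponent_finsetProd (Finset.range k) (f := fun _ => p) fun _ _ => hp

theorem totalDegree_bind₁_le {τ : Type*} {f : σ → MvPolynomial τ R} {k : ℕ}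
    (hf : ∀ i, (f i).totalDegree ≤ k) (p : MvPolynomial σ R) :
    (bind₁ f p).totalDegree ≤ p.totalDegree * k := by
  conv_lhs => rw [p.as_sum, map_sum]
  refine totalDegree_finsetSum_le fun d hd => ?_
  rw [bind₁_monomial]
  calc (C (coeff d p) * ∏ i ∈ d.support, f i ^ d i).totalDegree
      ≤ (C (coeff d p)).totalDegree + ∑ i ∈ d.support, (f i ^ d i).totalDegree :=
        (totalDegree_mul ..).trans (Nat.add_le_add_left (totalDegree_finsetProd ..) _)
    _ ≤ 0 + ∑ i ∈ d.support, d i * k := by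
      gcongr with i
      · exact (totalDegree_C _).le
      · exact (totalDegree_pow ..).trans (Nat.mul_le_mul_left _ (hf i))
    _ ≤ p.totalDegree * k := by
      rw [zero_add, ← Finset.sum_mul]
      exact Nat.mul_le_mul_right k (le_totalDegree hd)

theorem homogeneousComponent_bind₁_monomial {f : σ → MvPolynomial σ R}
    (hf : ∀ i, (f i).totalDegree ≤ 1) (hf₁ : ∀ i, homogeneousComponent 1 (f i) = X i)
    (d : σ →₀ ℕ) (r : R) :
    homogeneousComponent d.degree (bind₁ f (monomial d r)) = monomial d r := by
  have hpow (i : σ) : (f i ^ d i).totalDegree ≤ d i :=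
    (totalDegree_pow ..).trans (by simpa using Nat.mul_le_mul_left (d i) (hf i))
  rw [bind₁_monomial, homogeneousComponent_C_mul, Finsupp.degree_apply,
    homogeneousComponent_finsetProd _ fun i _ => hpow i, monomial_eq, Finsupp.prod]
  congr 1
  exact Finset.prod_congr rfl fun i _ => by
    simpa [hf₁] using homogeneousComponent_pow (hf i) (d i)

theorem homogeneousComponent_bind₁ {f : σ → MvPolynomial σ R}
    (hf : ∀ i, (f i).totalDegree ≤ 1) (hf₁ : ∀ i, homogeneousComponent 1 (f i) = X i)
    {p : MvPolynomial σ R} {n : ℕ} (hp : p.totalDegree ≤ n) :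
    homogeneousComponent n (bind₁ f p) = homogeneousComponent n p := by
  conv_lhs => rw [p.as_sum]
  conv_rhs => rw [p.as_sum]
  simp only [map_sum]
  refine Finset.sum_congr rfl fun d hd => ?_
  rcases (le_totalDegree hd |>.trans hp).lt_or_eq with hlt | rfl
  · have hmon : (monomial d (coeff d p)).totalDegree < n :=
      (totalDegree_monomial_le _ _).trans_lt hlt
    rw [homogeneousComponent_eq_zero _ _ hmon, homogeneousComponent_eq_zero _ _
      ((totalDegree_bind₁_le hf _).trans_lt (by rwa [mul_one]))]
  · exact (homogeneousComponent_bind₁_monomial hf hf₁ d _).trans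
      (homogeneousComponent_eq_self (isHomogeneous_monomial _ rfl)).symm

theorem eval_bind₁_X_add_C (y z : σ → R) (p : MvPolynomial σ R) :
    eval y (bind₁ (fun i => X i + C (z i)) p) = eval (y + z) p := by
  rw [eval, eval₂Hom_bind₁]
  congr 2
  ext i
  simp

theorem totalDegree_X_add_C_le (i : σ) (c : R) : (X i + C c).totalDegree ≤ 1 :=
  (totalDegree_add _ _).trans <| max_le (isHomogeneous_X R i).totalDegree_le (by simp)

theorem homogeneousComponent_one_X_add_C (i : σ) (c : R) :
    homogeneousComponent 1 (X i + C c) = X i := by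
  rw [map_add, homogeneousComponent_eq_self (isHomogeneous_X R i),
    homogeneousComponent_eq_zero _ _ (by simp), add_zero]

theorem totalDegree_bind₁_X_add_C_le (z : σ → R) (p : MvPolynomial σ R) :
    (bind₁ (fun i => X i + C (z i)) p).totalDegree ≤ p.totalDegree := by
  simpa using totalDegree_bind₁_le (fun i => totalDegree_X_add_C_le i (z i)) p

theorem coeff_bind₁_X_add_C {p : MvPolynomial σ R} {d : σ →₀ ℕ}
    (hp : p.totalDegree ≤ d.degree) (z : σ → R) :
    coeff d (bind₁ (fun i => X i + C (z i)) p) = coeff d p := by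
  simpa [coeff_homogeneousComponent] using congrArg (coeff d) <| homogeneousComponent_bind₁
    (fun i => totalDegree_X_add_C_le i (z i)) (fun i => homogeneousComponent_one_X_add_C i (z i))
    hp

end Degree

section Neighbourhood

variable {σ 𝕜 : Type*} [NontriviallyNormedField 𝕜] {U : Set (σ → 𝕜)} {x : σ → 𝕜}

theorem eq_zero_of_eval_eq_zero_of_mem_nhds {p : MvPolynomial σ 𝕜} (hU : U ∈ 𝓝 x)
    (h : ∀ y ∈ U, eval y p = 0) : p = 0 := by
  obtain ⟨I, -, t, ht, hsub⟩ := Filter.mem_pi.1 (nhds_pi (a := x) ▸ hU)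
  exact funext_set t (fun i => infinite_of_mem_nhds _ (ht i)) fun y hy => by
    simpa using h y (hsub fun i _ => hy i trivial)

variable [Finite σ]

theorem exists_coeff_eq_sum_eval (hU : U ∈ 𝓝 x) (N : ℕ) (s : σ →₀ ℕ) :
    ∃ w : (σ → 𝕜) →₀ 𝕜, ↑w.support ⊆ U ∧
      ∀ q : MvPolynomial σ 𝕜, q.totalDegree ≤ N →
        coeff s q = w.sum fun y c => c * eval y q := by
  let V := restrictTotalDegree σ 𝕜 N
  let ev (y : σ → 𝕜) : Module.Dual 𝕜 V := (aeval y).toLinearMap ∘ₗ V.subtype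
  have htop : Submodule.span 𝕜 (ev '' U) = ⊤ :=
    Submodule.span_eq_top_of_forall_dual_apply_eq_zero fun q hq => Subtype.ext <|
      eq_zero_of_eval_eq_zero_of_mem_nhds hU fun y hy => by
        simpa [ev] using hq (ev y) ⟨y, hy, rfl⟩
  obtain ⟨w, hw, hsum⟩ := (Finsupp.mem_span_image_iff_linearCombination 𝕜).1
    (htop ▸ Submodule.mem_top (x := lcoeff 𝕜 s ∘ₗ V.subtype))
  refine ⟨w, hw, fun q hq => ?_⟩
  have := LinearMap.congr_fun hsum ⟨q, (mem_restrictTotalDegree ..).2 hq⟩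
  simpa [ev, Finsupp.linearCombination_apply, Finsupp.sum] using this.symm

theorem exists_norm_coeff_le_of_forall_norm_eval_le (hU : U ∈ 𝓝 x) (N : ℕ)
    (s : σ →₀ ℕ) :
    ∃ C, 0 < C ∧ ∀ q : MvPolynomial σ 𝕜, q.totalDegree ≤ N →
      ∀ M, (∀ y ∈ U, ‖eval y q‖ ≤ M) → ‖coeff s q‖ ≤ C * M := by
  obtain ⟨w, hwU, hw⟩ := exists_coeff_eq_sum_eval hU N s
  refine ⟨∑ y ∈ w.support, ‖w y‖ + 1, by positivity, fun q hq M hM => ?_⟩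
  have hM₀ : 0 ≤ M := (norm_nonneg _).trans (hM x (mem_of_mem_nhds hU))
  calc ‖coeff s q‖ ≤ ∑ y ∈ w.support, ‖w y‖ * ‖eval y q‖ := by
        rw [hw q hq, Finsupp.sum]
        exact (norm_sum_le ..).trans_eq (by simp only [norm_mul])
    _ ≤ ∑ y ∈ w.support, ‖w y‖ * M := by gcongr with y hy; exact hM y (hwU hy)
    _ ≤ (∑ y ∈ w.support, ‖w y‖ + 1) * M := by
        rw [← Finset.sum_mul]; gcongr; exact le_add_of_nonneg_right zero_le_one

end Neighbourhood

end MvPolynomial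

/-- If `p : ℝ^d → ℝ` is a nonnegative polynomial with a nonzero coefficient in top degree,
then `inf_z sup_{|u-z| ≤ 1} p(u) > 0`. -/
theorem nonneg_polynomial_inf_sup_pos (d : ℕ) (p : MvPolynomial (Fin d) ℝ)
    (hpos : ∀ x : Fin d → ℝ, 0 ≤ MvPolynomial.eval x p)
    (htop : ∃ s : Fin d →₀ ℕ, p.coeff s ≠ 0 ∧ (s.sum fun _ e => e) = p.totalDegree) :
    ∃ ε : ℝ, 0 < ε ∧ ∀ z : EuclideanSpace ℝ (Fin d),
      ε ≤ sSup ((fun u : EuclideanSpace ℝ (Fin d) =>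
        MvPolynomial.eval (fun i => u i) p) '' closedBall z 1) := by
  obtain ⟨s, hs, hdeg⟩ := htop
  have hU : WithLp.toLp 2 ⁻¹' closedBall 0 1 ∈ 𝓝 (0 : Fin d → ℝ) :=
    (PiLp.continuous_toLp 2 _).continuousAt.preimage_mem_nhds (closedBall_mem_nhds _ one_pos)
  obtain ⟨K, hK, hbound⟩ := exists_norm_coeff_le_of_forall_norm_eval_le hU p.totalDegree s
  refine ⟨|coeff s p| / K, by positivity, fun z => ?_⟩
  have hbdd : BddAbove ((fun u : EuclideanSpace ℝ (Fin d) => eval (fun i => u i) p) ''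
      closedBall z 1) := (isCompact_closedBall z 1).bddAbove_image
    ((continuous_eval p).comp (PiLp.continuous_ofLp 2 _)).continuousOn
  rw [div_le_iff₀' hK, ← coeff_bind₁_X_add_C hdeg.ge (fun i => z i), ← Real.norm_eq_abs]
  refine hbound _ (totalDegree_bind₁_X_add_C_le _ _) _ fun y hy => ?_
  rw [Real.norm_eq_abs, eval_bind₁_X_add_C, abs_of_nonneg (hpos _)]
  refine le_csSup hbdd ⟨WithLp.toLp 2 y + z, ?_, rfl⟩
  simpa [mem_closedBall_iff_norm] using hy
end

section
/- Let Gamma be a finite subset of N^2 with (m,0),(0,n) in Gamma, m,n >= 2, and containing at least one point with both coordinates nonzero (non-decoupled). Let sigma = max{alpha/beta : (alpha,beta) in Gamma, alpha,beta != 0}. Then there exists delta > 0 (depending only on Gamma) such that for all (u,v) in R^2 with u >= 0 and v >= -sigma*u: m_{u,v}(Gamma^{(1)}) - m_{u,v}(Gamma^{(2)}) >= delta * max{u, v}, where m_{u,v}(A) = max_{(xi,eta) in A} (u*xi + v*eta). -/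
/-- `m_{u,v}(A) = max_{(ξ,η) ∈ A} (uξ + vη)`. -/
noncomputable def mUV (u v : ℝ) (A : Finset (ℕ × ℕ)) : ℝ :=
  sSup ((fun q : ℕ × ℕ => u * q.1 + v * q.2) '' (A : Set (ℕ × ℕ)))

lemma le_mUV (u v : ℝ) {A : Finset (ℕ × ℕ)} {q : ℕ × ℕ} (hq : q ∈ A) :
    u * q.1 + v * q.2 ≤ mUV u v A :=
  le_csSup ((A.finite_toSet.image _).bddAbove) ⟨q, hq, rfl⟩

lemma mUV_le (u v : ℝ) {A : Finset (ℕ × ℕ)} (hA : A.Nonempty) {c : ℝ}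
    (h : ∀ q ∈ A, u * q.1 + v * q.2 ≤ c) : mUV u v A ≤ c := by
  obtain ⟨q, hq⟩ := hA
  exact csSup_le ⟨_, q, hq, rfl⟩ (by rintro x ⟨q, hq, rfl⟩; exact h q hq)

lemma mem_GammaOne {Γ : Finset (ℕ × ℕ)} {p q : ℕ × ℕ} (hp : p ∈ Γ) (hq : q ∈ Γ)
    (h : p.1 * q.2 ≠ p.2 * q.1) : (p.1 + q.1 - 1, p.2 + q.2 - 1) ∈ GammaOne Γ :=
  Finset.mem_image.2 ⟨(p, q), Finset.mem_filter.2 ⟨Finset.mk_mem_product hp hq, h⟩, rfl⟩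

lemma cast_sub_one (x : ℕ) (h : 1 ≤ x) : ((x - 1 : ℕ) : ℝ) = (x : ℝ) - 1 := by
  rw [Nat.cast_sub h, Nat.cast_one]

/-- For a non-decoupled model weight with `(m,0),(0,n) ∈ Γ` and `m,n ≥ 2`, the gap
`m_{u,v}(Γ⁽¹⁾) - m_{u,v}(Γ⁽²⁾)` grows like `δ · max{u,v}` in the cone
`{u ≥ 0, v ≥ -σu}`, where `σ = max{α/β : (α,β) ∈ Γ mixed}`. -/
theorem linear_optimization_gap (Γ : Finset (ℕ × ℕ)) (m n : ℕ)
    (hm : (m, 0) ∈ Γ) (hn : (0, n) ∈ Γ) (hm2 : 2 ≤ m) (hn2 : 2 ≤ n)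
    (σ : ℝ) (hσ0 : 0 ≤ σ)
    (hσub : ∀ q ∈ Γ, q.1 ≠ 0 → q.2 ≠ 0 → (q.1 : ℝ) ≤ σ * q.2)
    (hσatt : ∃ q ∈ Γ, q.1 ≠ 0 ∧ q.2 ≠ 0 ∧ (q.1 : ℝ) = σ * q.2) :
    ∃ δ : ℝ, 0 < δ ∧ ∀ u v : ℝ, 0 ≤ u → -σ * u ≤ v →
      δ * max u v ≤ mUV u v (GammaOne Γ) - mUV u v (GammaTwo Γ) := by
  obtain ⟨q0, hq0, hc0, hd0, heq⟩ := hσatt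
  have hc1 : (1 : ℝ) ≤ (q0.1 : ℝ) := by exact_mod_cast Nat.one_le_iff_ne_zero.2 hc0
  have hd1 : (1 : ℝ) ≤ (q0.2 : ℝ) := by exact_mod_cast Nat.one_le_iff_ne_zero.2 hd0
  have hσpos : 0 < σ := by nlinarith
  refine ⟨min 1 σ, lt_min one_pos hσpos, ?_⟩
  intro u v hu hv
  set δ := min 1 σ with hδdef
  have hδ1 : δ ≤ 1 := min_le_left _ _
  have hδσ : δ ≤ σ := min_le_right _ _
  have hσuv : 0 ≤ σ * u + v := by linarith
  have hne : (GammaTwo Γ).Nonempty := by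
    refine ⟨(m - 1, 0), Finset.mem_union_left _ ?_⟩
    exact Finset.mem_image.2 ⟨(m, 0), Finset.mem_filter.2 ⟨hm, by omega⟩, rfl⟩
  have key : ∀ p ∈ GammaTwo Γ,
      u * p.1 + v * p.2 ≤ mUV u v (GammaOne Γ) - δ * max u v := by
    intro p hp
    rcases Finset.mem_union.1 hp with h | h
    · -- p = (a-1, b) with a ≠ 0
      obtain ⟨q, hqf, rfl⟩ := Finset.mem_image.1 h
      obtain ⟨hqΓ, ha⟩ := Finset.mem_filter.1 hqf
      have ha1 : (1 : ℝ) ≤ (q.1 : ℝ) := by exact_mod_cast Nat.one_le_iff_ne_zero.2 ha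
      rcases le_total u v with huv | hvu
      · -- use q + (0,n) - (1,1)
        have hv0 : 0 ≤ v := le_trans hu huv
        have hmem := mem_GammaOne hqΓ hn (by simp; omega)
        have hle := le_mUV u v hmem
        simp only at hle
        rw [cast_sub_one _ (by omega), cast_sub_one _ (by omega)] at hle
        push_cast at hle ⊢
        rw [max_eq_right huv, cast_sub_one q.1 (Nat.one_le_iff_ne_zero.2 ha)]
        have hn2' : (2 : ℝ) ≤ (n : ℝ) := by exact_mod_cast hn2
        nlinarith [mul_nonneg (sub_nonneg.2 hδ1) hv0,
          mul_nonneg (by linarith : (0:ℝ) ≤ (n:ℝ) - 2) hv0]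
      · rw [max_eq_left hvu]
        rcases eq_or_ne q.2 0 with hb | hb
        · -- q on x-axis: use q + q0 - (1,1)
          have hmem := mem_GammaOne hqΓ hq0 (by simp [hb]; exact ⟨ha, hd0⟩)
          have hle := le_mUV u v hmem
          simp only at hle
          rw [cast_sub_one _ (by omega), cast_sub_one _ (by omega)] at hle
          rw [cast_sub_one q.1 (Nat.one_le_iff_ne_zero.2 ha)]
          push_cast [hb] at hle ⊢
          rw [heq] at hle
          nlinarith [mul_nonneg (sub_nonneg.2 hd1) hσuv,
            mul_le_mul_of_nonneg_right hδσ hu]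
        · -- use q + (m,0) - (1,1)
          have hmem := mem_GammaOne hqΓ hm (by simp; exact ⟨hb, by omega⟩)
          have hle := le_mUV u v hmem
          simp only at hle
          rw [cast_sub_one _ (by omega), cast_sub_one _ (by omega)] at hle
          rw [cast_sub_one q.1 (Nat.one_le_iff_ne_zero.2 ha)]
          push_cast at hle ⊢
          have hm2' : (2 : ℝ) ≤ (m : ℝ) := by exact_mod_cast hm2
          nlinarith [mul_nonneg (sub_nonneg.2 hδ1) hu,
            mul_nonneg (by linarith : (0:ℝ) ≤ (m:ℝ) - 2) hu]
    · -- p = (a, b-1) with b ≠ 0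
      obtain ⟨q, hqf, rfl⟩ := Finset.mem_image.1 h
      obtain ⟨hqΓ, hb⟩ := Finset.mem_filter.1 hqf
      have hb1 : (1 : ℝ) ≤ (q.2 : ℝ) := by exact_mod_cast Nat.one_le_iff_ne_zero.2 hb
      rcases le_total v u with hvu | huv
      · -- use q + (m,0) - (1,1)
        rw [max_eq_left hvu]
        have hmem := mem_GammaOne hqΓ hm (by simp; exact ⟨hb, by omega⟩)
        have hle := le_mUV u v hmem
        simp only at hle
        rw [cast_sub_one _ (by omega), cast_sub_one _ (by omega)] at hle
        rw [cast_sub_one q.2 (Nat.one_le_iff_ne_zero.2 hb)]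
        push_cast at hle ⊢
        have hm2' : (2 : ℝ) ≤ (m : ℝ) := by exact_mod_cast hm2
        nlinarith [mul_nonneg (sub_nonneg.2 hδ1) hu,
          mul_nonneg (by linarith : (0:ℝ) ≤ (m:ℝ) - 2) hu]
      · rw [max_eq_right huv]
        have hv0 : 0 ≤ v := le_trans hu huv
        rcases eq_or_ne q.1 0 with ha | ha
        · -- q on y-axis: use q + q0 - (1,1)
          have hmem := mem_GammaOne hqΓ hq0 (by simp [ha]; exact ⟨hb, hc0⟩)
          have hle := le_mUV u v hmem
          simp only at hle
          rw [cast_sub_one _ (by omega), cast_sub_one _ (by omega)] at hle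
          rw [cast_sub_one q.2 (Nat.one_le_iff_ne_zero.2 hb)]
          push_cast at hle ⊢
          rw [ha]
          push_cast
          nlinarith [mul_nonneg (sub_nonneg.2 hd1) hσuv,
            mul_le_mul_of_nonneg_right hδσ hu,
            mul_nonneg (sub_nonneg.2 hδ1) (sub_nonneg.2 huv)]
        · -- use q + (0,n) - (1,1)
          have hmem := mem_GammaOne hqΓ hn (by simp; exact ⟨ha, by omega⟩)
          have hle := le_mUV u v hmem
          simp only at hle
          rw [cast_sub_one _ (by omega), cast_sub_one _ (by omega)] at hle
          rw [cast_sub_one q.2 (Nat.one_le_iff_ne_zero.2 hb)]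
          push_cast at hle ⊢
          have hn2' : (2 : ℝ) ≤ (n : ℝ) := by exact_mod_cast hn2
          nlinarith [mul_nonneg (sub_nonneg.2 hδ1) hv0,
            mul_nonneg (by linarith : (0:ℝ) ≤ (n:ℝ) - 2) hv0]
  have h2 := mUV_le u v hne key
  linarith
end
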